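/- For any balanced lattice design X ∈ U(n, q^s) with n ≥ 2 and every j ∈ {2, …, s}: B_j²(X) ≥ (n(n−1)/q^j)(C(θ, j) + f·C(θ, j−1)) − C(s, j)(n²/q^{2j} − n/q^j), where β̄ = s(n−q)/(q(n−1)), θ = ⌊β̄⌋, f = β̄ − θ, and B_j²(X) = q^{−j} Ψ_C(X; j). -/

import Mathlib

open Finset

/-- The coincidence number β(x, w) = #{j : x_j = w_j} of two lattice points. -/
def coincidence {s q : ℕ} (x w : Fin s → Fin q) : ℕ :=
  (univ.filter fun j => x j = w j).card

/-- A design `X ∈ U(n, q^s)` is balanced: `q ∣ n` and every level occurs exactly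
`n / q` times in each column. -/
def IsBalanced {n s q : ℕ} (X : Fin n → Fin s → Fin q) : Prop :=
  q ∣ n ∧ ∀ (j : Fin s) (ℓ : Fin q),
    (univ.filter fun i => X i j = ℓ).card = n / q

/-- The index set of pairs 1 ≤ i < k ≤ n. -/
def pairs (n : ℕ) : Finset (Fin n × Fin n) := univ.filter fun p => p.1 < p.2

/-- The Schur-combinatorial criterion
Ψ_C(X; j) = 2 ∑_{i<k} C(β(x_i,x_k), j) − C(s,j)(n²/qʲ − n). -/
noncomputable def PsiC {n s q : ℕ} (X : Fin n → Fin s → Fin q) (j : ℕ) : ℝ :=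
  2 * ∑ p ∈ pairs n, ((coincidence (X p.1) (X p.2)).choose j : ℝ)
    - (s.choose j : ℝ) * ((n : ℝ) ^ 2 / (q : ℝ) ^ j - n)

/-!
Each coincidence number β = β(x_i, x_k) satisfies the tangent-line bound
C(β, j) ≥ C(θ, j) + (β − θ) C(θ, j − 1), valid for every natural θ because β ↦ C(β, j) is
discretely convex. Summing over the n(n − 1)/2 pairs of rows, only the total coincidence enters,
and balance fixes it: in each column every row agrees with exactly n/q rows (itself included),
so the pairs carry n(n − 1)β̄/2 coincidences in total.
-/

namespace Nat

theorem choose_succ_add_mul_choose_le (j a d : ℕ) :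
    a.choose (j + 1) + d * a.choose j ≤ (a + d).choose (j + 1) := by
  induction d with
  | zero => simp
  | succ d ih =>
    have hmono : a.choose j ≤ (a + d).choose j := choose_le_choose j (le_add_right a d)
    rw [← add_assoc, choose_succ_succ', add_mul, one_mul]
    omega

theorem choose_add_le_choose_succ_add_mul (j a d : ℕ) :
    (a + d).choose (j + 1) ≤ a.choose (j + 1) + d * (a + d).choose j := by
  induction d with
  | zero => simp
  | succ d ih =>
    have hmono : (a + d).choose j ≤ (a + (d + 1)).choose j := choose_le_choose j (by omega)
    have hmul : d * (a + d).choose j ≤ d * (a + (d + 1)).choose j := Nat.mul_le_mul_left d hmono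
    rw [← add_assoc, choose_succ_succ', add_mul, one_mul, add_assoc]
    omega

theorem choose_succ_add_sub_mul_choose_le (j θ m : ℕ) :
    (θ.choose (j + 1) : ℝ) + ((m : ℝ) - θ) * θ.choose j ≤ m.choose (j + 1) := by
  rcases le_total θ m with h | h
  · obtain ⟨d, rfl⟩ := Nat.exists_eq_add_of_le h
    have := Nat.cast_le (α := ℝ) |>.2 (choose_succ_add_mul_choose_le j θ d)
    push_cast at this ⊢
    linarith
  · obtain ⟨d, rfl⟩ := Nat.exists_eq_add_of_le h
    have := Nat.cast_le (α := ℝ) |>.2 (choose_add_le_choose_succ_add_mul j m d)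
    push_cast at this ⊢
    linarith

end Nat

theorem card_mul_choose_add_le_sum_choose {ι : Type*} (S : Finset ι) (b : ι → ℕ) (j θ : ℕ) :
    #S * (θ.choose (j + 1) : ℝ) + (∑ i ∈ S, (b i : ℝ) - #S * θ) * θ.choose j
      ≤ ∑ i ∈ S, ((b i).choose (j + 1) : ℝ) :=
  calc _ = ∑ i ∈ S, ((θ.choose (j + 1) : ℝ) + ((b i : ℝ) - θ) * θ.choose j) := by
        rw [sum_add_distrib, sum_const, nsmul_eq_mul, ← sum_mul, sum_sub_distrib, sum_const,
          nsmul_eq_mul]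
    _ ≤ _ := sum_le_sum fun i _ => Nat.choose_succ_add_sub_mul_choose_le j θ (b i)

theorem two_nsmul_sum_pairs_add_sum_diag {M : Type*} [AddCommMonoid M] {n : ℕ}
    (g : Fin n → Fin n → M) (hg : ∀ i k, g i k = g k i) :
    2 • ∑ p ∈ pairs n, g p.1 p.2 + ∑ i, g i i = ∑ i, ∑ k, g i k := by
  have hsplit : ∀ p : Fin n × Fin n, g p.1 p.2 =
      ((if p.1 < p.2 then g p.1 p.2 else 0) + if p.2 < p.1 then g p.1 p.2 else 0) +
        if p.1 = p.2 then g p.1 p.2 else 0 := by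
    intro p
    rcases lt_trichotomy p.1 p.2 with h | h | h
    · simp [h, h.ne, h.not_gt]
    · simp [h]
    · simp [h, h.ne', h.not_gt]
  have hswap : ∑ p : Fin n × Fin n, (if p.2 < p.1 then g p.1 p.2 else 0)
      = ∑ p : Fin n × Fin n, (if p.1 < p.2 then g p.1 p.2 else 0) :=
    Fintype.sum_equiv (Equiv.prodComm _ _) _ _ fun p => by
      rw [hg]; rfl
  have hdiag : ∑ p : Fin n × Fin n, (if p.1 = p.2 then g p.1 p.2 else 0) = ∑ i, g i i := by
    simp [Fintype.sum_prod_type]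
  rw [← Fintype.sum_prod_type', Fintype.sum_congr _ _ hsplit, sum_add_distrib, sum_add_distrib,
    hswap, hdiag, ← two_nsmul, pairs, sum_filter]

theorem coincidence_comm {s q : ℕ} (x w : Fin s → Fin q) :
    coincidence x w = coincidence w x := by
  simp only [coincidence, eq_comm]

theorem coincidence_self {s q : ℕ} (x : Fin s → Fin q) : coincidence x x = s := by
  simp [coincidence]

theorem two_mul_card_pairs (n : ℕ) : 2 * (#(pairs n) : ℝ) = n * (n - 1) := by
  have h := two_nsmul_sum_pairs_add_sum_diag (fun (_ _ : Fin n) => (1 : ℝ)) fun _ _ => rfl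
  simp only [sum_const, card_univ, Fintype.card_fin, nsmul_eq_mul, Nat.cast_ofNat, mul_one] at h
  linarith

section Balanced

variable {n s q : ℕ} {X : Fin n → Fin s → Fin q}

theorem sum_sum_coincidence_of_isBalanced (hX : IsBalanced X) :
    ∑ i, ∑ k, coincidence (X i) (X k) = s * (n * (n / q)) := by
  have hcol : ∀ (c : Fin s) (i : Fin n), #{k | X i c = X k c} = n / q := fun c i => by
    simpa only [eq_comm] using hX.2 c (X i c)
  calc ∑ i, ∑ k, coincidence (X i) (X k)
      = ∑ i : Fin n, ∑ c : Fin s, #{k | X i c = X k c} := by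
        simp only [coincidence, card_filter]
        exact sum_congr rfl fun i _ => sum_comm
    _ = s * (n * (n / q)) := by
        simp only [hcol, sum_const, card_univ, Fintype.card_fin, smul_eq_mul]
        ring

theorem IsBalanced.ne_zero (hX : IsBalanced X) (hn : n ≠ 0) : q ≠ 0 :=
  ne_zero_of_dvd_ne_zero hn hX.1

theorem two_mul_sum_pairs_coincidence (hX : IsBalanced X) (hn : n ≠ 0) :
    2 * ∑ p ∈ pairs n, (coincidence (X p.1) (X p.2) : ℝ) = s * n * (n - q) / q := by
  have hq : (q : ℝ) ≠ 0 := Nat.cast_ne_zero.2 (hX.ne_zero hn)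
  have h := two_nsmul_sum_pairs_add_sum_diag (fun i k => (coincidence (X i) (X k) : ℝ))
    fun i k => by rw [coincidence_comm]
  have htotal := congrArg (Nat.cast : ℕ → ℝ) (sum_sum_coincidence_of_isBalanced hX)
  push_cast [Nat.cast_div hX.1 hq] at htotal
  simp only [coincidence_self, sum_const, card_univ, Fintype.card_fin, nsmul_eq_mul,
    Nat.cast_ofNat, htotal] at h
  field_simp at h ⊢
  linear_combination h

end Balanced

theorem deviation_lower_bound_general (n s q : ℕ) (hn : 2 ≤ n)
    (X : Fin n → Fin s → Fin q) (hX : IsBalanced X)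
    (j : ℕ) (hj1 : 2 ≤ j)
    (βbar : ℝ) (hβbar : βbar = (s : ℝ) * ((n : ℝ) - q) / ((q : ℝ) * ((n : ℝ) - 1)))
    (θ : ℕ)
    (f : ℝ) (hf : f = βbar - θ) :
    PsiC X j / (q : ℝ) ^ j ≥
      (n : ℝ) * ((n : ℝ) - 1) / (q : ℝ) ^ j *
          ((θ.choose j : ℝ) + f * (θ.choose (j - 1) : ℝ))
        - (s.choose j : ℝ) * ((n : ℝ) ^ 2 / (q : ℝ) ^ (2 * j) - (n : ℝ) / (q : ℝ) ^ j) := by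
  obtain ⟨i, rfl⟩ : ∃ i, j = i + 1 := ⟨j - 1, by omega⟩
  have hq : (q : ℝ) ≠ 0 := Nat.cast_ne_zero.2 (hX.ne_zero (by omega))
  have hn1 : (n : ℝ) - 1 ≠ 0 := by
    have : (2 : ℝ) ≤ n := by exact_mod_cast hn
    linarith
  have hcoinc : 2 * ∑ p ∈ pairs n, (coincidence (X p.1) (X p.2) : ℝ) = n * (n - 1) * βbar := by
    rw [two_mul_sum_pairs_coincidence hX (by omega), hβbar]
    field_simp
  have hkey : n * (n - 1) * (θ.choose (i + 1) + f * θ.choose i)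
      ≤ 2 * ∑ p ∈ pairs n, ((coincidence (X p.1) (X p.2)).choose (i + 1) : ℝ) := by
    have := card_mul_choose_add_le_sum_choose (pairs n) (fun p => coincidence (X p.1) (X p.2)) i θ
    rw [hf]
    linear_combination 2 * this + (θ * θ.choose i - θ.choose (i + 1) : ℝ) * two_mul_card_pairs n
      - (θ.choose i : ℝ) * hcoinc
  rw [Nat.add_sub_cancel, ge_iff_le]
  calc _ = (n * (n - 1) * (θ.choose (i + 1) + f * θ.choose i)
          - s.choose (i + 1) * (n ^ 2 / q ^ (i + 1) - n)) / (q : ℝ) ^ (i + 1) := by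
        field_simp
        ring
    _ ≤ PsiC X (i + 1) / (q : ℝ) ^ (i + 1) := by
        unfold PsiC
        gcongr

/-- Theorem 3 (benchmark for the deviation pattern): for a balanced design and
2 ≤ j ≤ s, B_j²(X) = q^{−j} Ψ_C(X; j) is bounded below by
(n(n−1)/qʲ)(C(θ,j) + f C(θ,j−1)) − C(s,j)(n²/q^{2j} − n/qʲ). -/
theorem deviation_lower_bound (n s q : ℕ) (hq : 2 ≤ q) (hn : 2 ≤ n)
    (X : Fin n → Fin s → Fin q) (hX : IsBalanced X)
    (j : ℕ) (hj1 : 2 ≤ j) (hjs : j ≤ s)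
    (βbar : ℝ) (hβbar : βbar = (s : ℝ) * ((n : ℝ) - q) / ((q : ℝ) * ((n : ℝ) - 1)))
    (θ : ℕ) (hθ : θ = ⌊βbar⌋₊)
    (f : ℝ) (hf : f = βbar - θ) :
    PsiC X j / (q : ℝ) ^ j ≥
      (n : ℝ) * ((n : ℝ) - 1) / (q : ℝ) ^ j *
          ((θ.choose j : ℝ) + f * (θ.choose (j - 1) : ℝ))
        - (s.choose j : ℝ) * ((n : ℝ) ^ 2 / (q : ℝ) ^ (2 * j) - (n : ℝ) / (q : ℝ) ^ j) :=
  deviation_lower_bound_general n s q hn X hX j hj1 βbar hβbar θ f hf
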